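/- arXiv:1612.05090 — 2 statements merged into one kernel-verified Lean document; each statement's English description precedes it below -/
import Mathlib

section
/- Let $a^1 \leq \cdots \leq a^m$ and $b^1 \leq \cdots \leq b^d$ be integers with $m \geq d$, and suppose the greedy swapping procedure produces no cycles and the hole positions are invariant under wall-crossing (statements $B$ and $D$). Let $h_1$ be the position of the first hole. Then $M(b^j) = a^j$ for all $j < h_1$, i.e. every bottom-row entry strictly left of the first hole is rematched (order-preservingly) with the top-row entry in the same position. -/
/-! Common framework: two-row tableaux as pairs of (weakly increasing) lists of
integers, the greedy swapping procedure, the order-preserving rematching,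
wall-crossing, and the charge-shift `Δ_e`.  Positions are 1-based. -/

/-- The entry of a list at 1-based position `i` (default `0` out of range). -/
def ent (L : List ℤ) (i : ℕ) : ℤ := L.getD (i - 1) 0

/-- Greedy pick: the top-row position chosen for a bottom entry of value `x`,
given the set `used` of already used top positions: the maximal unused position
whose entry is `≤ x` if one exists, otherwise the maximal unused position
(a "cycle"). -/
def pickPos (A : List ℤ) (used : Finset ℕ) (x : ℤ) : ℕ :=
  let avail := (Finset.Icc 1 A.length) \ used
  let cand := avail.filter (fun i => ent A i ≤ x)
  if cand.Nonempty then WithBot.unbotD 0 cand.max else WithBot.unbotD 0 avail.max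

/-- The set of used top-row positions after the first `j` steps of the greedy
swapping procedure (bottom entries processed in increasing order). -/
def usedPos (A B : List ℤ) : ℕ → Finset ℕ
  | 0 => ∅
  | j + 1 => insert (pickPos A (usedPos A B j) (ent B (j + 1))) (usedPos A B j)

/-- `Spos A B j` is the top-row position greedily matched with bottom position `j`. -/
def Spos (A B : List ℤ) (j : ℕ) : ℕ := pickPos A (usedPos A B (j - 1)) (ent B j)

/-- No cycles occur: every bottom entry is matched with a top entry not exceeding it. -/
def NoCycles (A B : List ℤ) : Prop :=
  ∀ j, 1 ≤ j → j ≤ B.length → ent A (Spos A B j) ≤ ent B j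

/-- The set of all matched (paired) top-row positions. -/
def matchedPos (A B : List ℤ) : Finset ℕ := usedPos A B B.length

/-- The order-preserving rematching: `Mpos A B j` is the `j`-th smallest matched
top-row position, so `M(b^j) = a^{Mpos A B j}`. -/
def Mpos (A B : List ℤ) (j : ℕ) : ℕ :=
  ((matchedPos A B).sort (· ≤ ·)).getD (j - 1) 0

/-- A top-row position is a hole if it is in range and never matched. -/
def IsHole (A B : List ℤ) (i : ℕ) : Prop :=
  i ∈ Finset.Icc 1 A.length ∧ i ∉ matchedPos A B

/-- The top row after replacing each matched entry `M(b^j) = a^{i_j}` by `b^j`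
(before re-sorting). -/
def swappedTop (A B : List ℤ) : List ℤ :=
  (List.range A.length).map (fun (t : ℕ) =>
    if (t + 1) ∈ matchedPos A B then
      ent B ((((matchedPos A B).sort (· ≤ ·)).idxOf (t + 1)) + 1)
    else ent A (t + 1))

/-- The top row after wall-crossing: swapped and re-sorted into increasing order. -/
def wcTop (A B : List ℤ) : List ℤ := List.insertionSort (· ≤ ·) (swappedTop A B)

/-- The bottom row after wall-crossing: `j`-th entry is `a^{Mpos A B j}`. -/
def wcBot (A B : List ℤ) : List ℤ :=
  (List.range B.length).map (fun (t : ℕ) => ent A (Mpos A B (t + 1)))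

/-- The charge shift `Δ_e` on the top row: prepend the `e` consecutive integers
starting at the smallest bottom entry, and add `e` to every old top entry. -/
def deltaTop (e : ℕ) (A B : List ℤ) : List ℤ :=
  (List.range e).map (fun i => ent B 1 + (i : ℤ)) ++ A.map (· + (e : ℤ))

/-- Top row of the two-row tableau of the charged symmetric bipartition
`|(λ,λ), (0, e/2)⟩`, where `d ≥ e/2` satisfies `λ_{d+1-e/2} = λ_{d+1} = 0`. -/
def topInit (p : ℕ → ℕ) (e d : ℕ) : List ℤ :=
  (List.range (d + 1)).map (fun (t : ℕ) =>
    ((e / 2 : ℕ) : ℤ) - (d : ℤ) + (t : ℤ) + (Int.ofNat (p (d + 1 - t))))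

/-- Bottom row of the two-row tableau of `|(λ,λ), (0, e/2)⟩`. -/
def botInit (p : ℕ → ℕ) (e d : ℕ) : List ℤ :=
  (List.range (d + 1 - e / 2)).map (fun (t : ℕ) =>
    ((e / 2 : ℕ) : ℤ) - (d : ℤ) + (t : ℤ) + (Int.ofNat (p (d + 1 - e / 2 - t))))

/-- The iterated sequence of two-row tableaux: `tab p e d 0` is the tableau of
`|(λ,λ),(0,e/2)⟩` and `tab p e d (k+1) = Δ_e (wc (tab p e d k))`. -/
def tab (p : ℕ → ℕ) (e d : ℕ) : ℕ → List ℤ × List ℤ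
  | 0 => (topInit p e d, botInit p e d)
  | k + 1 =>
    (deltaTop e (wcTop (tab p e d k).1 (tab p e d k).2) (wcBot (tab p e d k).1 (tab p e d k).2),
      wcBot (tab p e d k).1 (tab p e d k).2)

/-! Position `0` is never matched and every position left of the first hole is, so among the
matched positions those below `h₁` are exactly `1, …, h₁ - 1`; the `j`-th smallest matched
position is therefore `j`. -/

theorem Finset.getD_sort_eq_nth (S : Finset ℕ) (n : ℕ) :
    (S.sort (· ≤ ·)).getD n 0 = Nat.nth (· ∈ S) n := by
  rw [Nat.nth_eq_getD_sort (p := (· ∈ S)) S.finite_toSet, Finset.finite_toSet_toFinset]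

theorem Finset.getD_sort_pred_eq_self {S : Finset ℕ} (h0 : 0 ∉ S) {j : ℕ}
    (hS : Finset.Ico 1 j ⊆ S) (hj : j ∈ S) :
    (S.sort (· ≤ ·)).getD (j - 1) 0 = j := by
  have hbelow : (Finset.range j).filter (· ∈ S) = Finset.Ico 1 j := by
    ext i
    simp only [Finset.mem_filter, Finset.mem_range, Finset.mem_Ico]
    constructor
    · rintro ⟨hij, hiS⟩
      exact ⟨Nat.one_le_iff_ne_zero.2 (by rintro rfl; exact h0 hiS), hij⟩
    · rintro ⟨hi, hij⟩
      exact ⟨hij, hS (Finset.mem_Ico.2 ⟨hi, hij⟩)⟩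
  have hcount : Nat.count (· ∈ S) j = j - 1 := by
    rw [Nat.count_eq_card_filter_range, hbelow, Nat.card_Ico]
  rw [Finset.getD_sort_eq_nth, ← hcount, Nat.nth_count hj]

lemma pickPos_mem (A : List ℤ) (used : Finset ℕ) (x : ℤ)
    (h : (Finset.Icc 1 A.length \ used).Nonempty) :
    pickPos A used x ∈ Finset.Icc 1 A.length \ used := by
  simp only [pickPos]
  split_ifs with hc
  · rw [← Finset.coe_max' hc, WithBot.unbotD_coe]
    exact Finset.mem_of_mem_filter _ (Finset.max'_mem _ hc)
  · rw [← Finset.coe_max' h, WithBot.unbotD_coe]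
    exact Finset.max'_mem _ h

lemma card_usedPos_le (A B : List ℤ) (k : ℕ) : (usedPos A B k).card ≤ k := by
  induction k with
  | zero => simp [usedPos]
  | succ k ih => exact (Finset.card_insert_le _ _).trans (Nat.succ_le_succ ih)

lemma usedPos_subset_Icc (A B : List ℤ) {k : ℕ} (hk : k ≤ A.length) :
    usedPos A B k ⊆ Finset.Icc 1 A.length := by
  induction k with
  | zero => simp [usedPos]
  | succ k ih =>
    have hsub := ih (Nat.le_of_succ_le hk)
    have havail : (Finset.Icc 1 A.length \ usedPos A B k).Nonempty := by
      rw [← Finset.card_pos, Finset.card_sdiff_of_subset hsub, Nat.card_Icc]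
      have := card_usedPos_le A B k
      omega
    exact Finset.insert_subset (Finset.mem_sdiff.1 (pickPos_mem A _ _ havail)).1 hsub

lemma zero_notMem_matchedPos (A B : List ℤ) (hlen : B.length ≤ A.length) :
    0 ∉ matchedPos A B := fun h => by
  simpa using (Finset.mem_Icc.1 (usedPos_subset_Icc A B hlen h)).1

theorem stmt7_general (A B : List ℤ)
    (hlen : B.length ≤ A.length)
    (h1 : ℕ)
    (hmin : ∀ i, 1 ≤ i → i < h1 → i ∈ matchedPos A B) :
    ∀ j, 1 ≤ j → j < h1 → Mpos A B j = j := by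
  intro j hj hjh
  refine Finset.getD_sort_pred_eq_self (zero_notMem_matchedPos A B hlen) (fun i hi => ?_)
    (hmin j hj hjh)
  obtain ⟨hi1, hij⟩ := Finset.mem_Ico.1 hi
  exact hmin i hi1 (hij.trans hjh)

/-- assuming no cycles and invariance of holes under wall-crossing,
every bottom entry strictly left of the first hole `h₁` is rematched with the
top entry in the same position: `M(b^j) = a^j` for `j < h₁`. -/
theorem stmt7 (A B : List ℤ) (hA : List.Pairwise (· ≤ ·) A) (hB : List.Pairwise (· ≤ ·) B)
    (hlen : B.length ≤ A.length)
    (hdom : ∀ j, 1 ≤ j → j ≤ B.length → ent A j ≤ ent B j)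
    (hnc : NoCycles A B)
    (hholes : ∀ h, IsHole A B h → ent (wcTop A B) h = ent A h)
    (h1 : ℕ) (hh1 : IsHole A B h1)
    (hmin : ∀ i, 1 ≤ i → i < h1 → i ∈ matchedPos A B) :
    ∀ j, 1 ≤ j → j < h1 → Mpos A B j = j :=
  stmt7_general A B hlen h1 hmin
end

section
/- Let $a^1 \leq \cdots \leq a^m$ and $b^1 \leq \cdots \leq b^d$ be integers with $m \geq d$ and $b^j \geq a^j$ for all $j$ (so there are no cycles). Let $h_1$ be the index of the first hole. Then $b^{h_1 - 1} \leq a^{h_1}$ (when $h_1 \geq 2$), i.e. the bottom-row entry immediately preceding the first hole does not exceed the first hole. -/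
/-
Every position before the first hole `h₁` is matched, so at least `h₁ - 1` distinct bottom
positions `j` were matched to top positions `< h₁`, and one of them has `j ≥ h₁ - 1`. When
`b^j` was processed the hole `h₁` was still unused and lies to the right of the position
chosen, so by greedy maximality `a^{h₁} > b^j ≥ b^{h₁-1}`.
-/

lemma le_unbotD_max {s : Finset ℕ} {a : ℕ} (h : a ∈ s) : a ≤ WithBot.unbotD 0 s.max := by
  obtain ⟨b, hb⟩ := Finset.max_of_mem h
  rw [hb, WithBot.unbotD_coe]
  exact Finset.le_max_of_eq h hb

lemma le_pickPos {A : List ℤ} {used : Finset ℕ} {x : ℤ} {i : ℕ}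
    (hi : i ∈ Finset.Icc 1 A.length \ used) (hx : ent A i ≤ x) : i ≤ pickPos A used x := by
  have hcand : i ∈ (Finset.Icc 1 A.length \ used).filter (fun k => ent A k ≤ x) :=
    Finset.mem_filter.2 ⟨hi, hx⟩
  simp only [pickPos]
  rw [if_pos ⟨i, hcand⟩]
  exact le_unbotD_max hcand

lemma usedPos_eq_image_Spos (A B : List ℤ) (n : ℕ) :
    usedPos A B n = (Finset.Icc 1 n).image (Spos A B) := by
  induction n with
  | zero => rfl
  | succ n ih =>
    have hIcc := Finset.insert_Icc_right_eq_Icc_succ (a := 1) (b := n) (by simp)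
    rw [Order.succ_eq_add_one] at hIcc
    rw [← hIcc, Finset.image_insert, ← ih]
    rfl

lemma mem_matchedPos_iff {A B : List ℤ} {i : ℕ} :
    i ∈ matchedPos A B ↔ ∃ j ∈ Finset.Icc 1 B.length, Spos A B j = i := by
  rw [matchedPos, usedPos_eq_image_Spos, Finset.mem_image]

lemma usedPos_mono (A B : List ℤ) : Monotone (usedPos A B) :=
  monotone_nat_of_le_succ fun _ => Finset.subset_insert _ _

lemma IsHole.notMem_usedPos {A B : List ℤ} {h n : ℕ} (hh : IsHole A B h)
    (hn : n ≤ B.length) : h ∉ usedPos A B n :=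
  fun hmem => hh.2 (usedPos_mono A B hn hmem)

lemma IsHole.le_Spos_of_ent_le {A B : List ℤ} {h j : ℕ} (hh : IsHole A B h)
    (hj : j ≤ B.length) (hle : ent A h ≤ ent B j) : h ≤ Spos A B j :=
  le_pickPos (Finset.mem_sdiff.2 ⟨hh.1, hh.notMem_usedPos (by omega)⟩) hle

lemma ent_le_ent {L : List ℤ} (hL : List.Pairwise (· ≤ ·) L) {i j : ℕ}
    (hi : 1 ≤ i) (hij : i ≤ j) (hj : j ≤ L.length) : ent L i ≤ ent L j := by
  have hi' : i - 1 < L.length := by omega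
  have hj' : j - 1 < L.length := by omega
  rw [ent, ent, L.getD_eq_getElem 0 hi', L.getD_eq_getElem 0 hj']
  exact hL.rel_get_of_le (a := ⟨i - 1, hi'⟩) (b := ⟨j - 1, hj'⟩)
    (Fin.mk_le_mk.mpr (by omega))

lemma exists_le_mem_of_le_card {S : Finset ℕ} {k : ℕ} (h0 : 0 ∉ S) (hk0 : 0 < k)
    (hk : k ≤ S.card) : ∃ j ∈ S, k ≤ j := by
  by_contra! hlt
  have hsub : S ⊆ Finset.Ico 1 k := fun j hj =>
    Finset.mem_Ico.2 ⟨Nat.pos_of_ne_zero (fun h => h0 (h ▸ hj)), hlt j hj⟩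
  have := Finset.card_le_card hsub
  rw [Nat.card_Ico] at this
  omega

theorem stmt8_general (A B : List ℤ) (hB : List.Pairwise (· ≤ ·) B)
    (h1 : ℕ) (hh1 : IsHole A B h1)
    (hmin : ∀ i, 1 ≤ i → i < h1 → i ∈ matchedPos A B) :
    2 ≤ h1 → ent B (h1 - 1) ≤ ent A h1 := by
  intro h2
  set S := (Finset.Icc 1 B.length).filter (fun j => Spos A B j < h1)
  have hcover : Finset.Icc 1 (h1 - 1) ⊆ S.image (Spos A B) := by
    intro i hi
    rw [Finset.mem_Icc] at hi
    obtain ⟨j, hj, rfl⟩ := mem_matchedPos_iff.1 (hmin i hi.1 (by omega))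
    exact Finset.mem_image_of_mem _ (Finset.mem_filter.2 ⟨hj, by omega⟩)
  have hcard : h1 - 1 ≤ S.card := by
    simpa using (Finset.card_le_card hcover).trans Finset.card_image_le
  obtain ⟨j, hjS, hj⟩ := exists_le_mem_of_le_card (by simp [S]) (by omega) hcard
  obtain ⟨hjB, hjlt⟩ := Finset.mem_filter.1 hjS
  rw [Finset.mem_Icc] at hjB
  by_contra! hlt
  have := hh1.le_Spos_of_ent_le hjB.2 (hlt.le.trans (ent_le_ent hB (by omega) hj hjB.2))
  omega

/-- under dominance (so no cycles occur), the bottom entry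
immediately preceding the first hole `h₁` does not exceed it: `b^(h₁-1) ≤ a^(h₁)`. -/
theorem stmt8 (A B : List ℤ) (hA : List.Pairwise (· ≤ ·) A) (hB : List.Pairwise (· ≤ ·) B)
    (hlen : B.length ≤ A.length)
    (hdom : ∀ j, 1 ≤ j → j ≤ B.length → ent A j ≤ ent B j)
    (h1 : ℕ) (hh1 : IsHole A B h1)
    (hmin : ∀ i, 1 ≤ i → i < h1 → i ∈ matchedPos A B) :
    2 ≤ h1 → ent B (h1 - 1) ≤ ent A h1 :=
  stmt8_general A B hB h1 hh1 hmin
end
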